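/- arXiv:1204.6695 — 8 statements merged into one kernel-verified Lean document; each statement's English description precedes it below -/
import Mathlib

section
/- If O and O' are open subgraphs of a string graph G, then O ∩ O' is an open subgraph of G. -/
/-- Vertex types: node-vertices, wire-vertices and `!`-vertices. -/
inductive VTy : Type
  | node | wire | bang
  deriving DecidableEq

/-- A directed graph whose vertices are typed by `VTy`. -/
structure TGraph (V E : Type) where
  s : E → V
  t : E → V
  ty : V → VTy

namespace TGraph

variable {V E : Type}

/-- No edge has both a node-vertex source and a node-vertex target. -/
def NoNodeNode (G : TGraph V E) : Prop :=
  ∀ e, ¬ (G.ty (G.s e) = .node ∧ G.ty (G.t e) = .node)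

/-- A `G₂`-typed graph: only node- and wire-vertices, no node-node edges. -/
def IsG2 (G : TGraph V E) : Prop :=
  G.NoNodeNode ∧ ∀ v, G.ty v ≠ .bang

/-- A `G₃`-typed graph: no node-node edges, and every edge into a `!`-vertex
comes from a `!`-vertex. -/
def IsG3 (G : TGraph V E) : Prop :=
  G.NoNodeNode ∧ ∀ e, G.ty (G.t e) = .bang → G.ty (G.s e) = .bang

/-- An input: a wire-vertex all of whose in-edges have `!`-vertex sources.
In a `G₂`-typed graph this says exactly: a wire-vertex with no in-edges. -/
def IsInput (G : TGraph V E) (v : V) : Prop :=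
  G.ty v = .wire ∧ ∀ e, G.t e = v → G.ty (G.s e) = .bang

/-- An output: a wire-vertex with no out-edges. -/
def IsOutput (G : TGraph V E) (v : V) : Prop :=
  G.ty v = .wire ∧ ∀ e, G.s e ≠ v

/-- A string graph: a `G₂`-typed graph where every wire-vertex has at most one
in-edge and at most one out-edge. -/
def IsStringGraph (G : TGraph V E) : Prop :=
  G.IsG2 ∧ ∀ v, G.ty v = .wire →
    (∀ e₁ e₂, G.t e₁ = v → G.t e₂ = v → e₁ = e₂) ∧
    (∀ e₁ e₂, G.s e₁ = v → G.s e₂ = v → e₁ = e₂)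

/-- The set of successors of a vertex. -/
def bsucc (G : TGraph V E) (b : V) : Set V := {v | ∃ e, G.s e = b ∧ G.t e = v}

/-- The set of predecessors of a vertex. -/
def bpred (G : TGraph V E) (b : V) : Set V := {v | ∃ e, G.s e = v ∧ G.t e = b}

/-- The full subgraph on a set of vertices, as a standalone graph. -/
def restrict (G : TGraph V E) (S : Set V) :
    TGraph {v : V // v ∈ S} {e : E // G.s e ∈ S ∧ G.t e ∈ S} where
  s e := ⟨G.s e.1, e.2.1⟩
  t e := ⟨G.t e.1, e.2.2⟩
  ty v := G.ty v.1

/-- A subgraph of a graph. -/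
structure Sub (G : TGraph V E) where
  verts : Set V
  edges : Set E
  s_mem : ∀ e ∈ edges, G.s e ∈ verts
  t_mem : ∀ e ∈ edges, G.t e ∈ verts

namespace Sub

variable {G : TGraph V E}

/-- The whole graph as a subgraph of itself. -/
def top (G : TGraph V E) : Sub G :=
  ⟨Set.univ, Set.univ, fun _ _ => trivial, fun _ _ => trivial⟩

def inter (A B : Sub G) : Sub G :=
  ⟨A.verts ∩ B.verts, A.edges ∩ B.edges,
    fun e he => ⟨A.s_mem e he.1, B.s_mem e he.2⟩,
    fun e he => ⟨A.t_mem e he.1, B.t_mem e he.2⟩⟩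

def union (A B : Sub G) : Sub G :=
  ⟨A.verts ∪ B.verts, A.edges ∪ B.edges,
    fun e he => he.elim (fun h => Or.inl (A.s_mem e h)) (fun h => Or.inr (B.s_mem e h)),
    fun e he => he.elim (fun h => Or.inl (A.t_mem e h)) (fun h => Or.inr (B.t_mem e h))⟩

/-- `H∖A` : the largest subgraph of `H` that is disjoint from `A`
(the full subgraph of `H` on the vertices of `H` not in `A`). -/
def minus (H A : Sub G) : Sub G :=
  ⟨H.verts \ A.verts, {e | e ∈ H.edges ∧ G.s e ∉ A.verts ∧ G.t e ∉ A.verts},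
    fun e he => ⟨H.s_mem e he.1, he.2.1⟩,
    fun e he => ⟨H.t_mem e he.1, he.2.2⟩⟩

/-- An input of a subgraph: a wire-vertex of the subgraph all of whose in-edges
(inside the subgraph) have `!`-vertex sources. -/
def IsInput (A : Sub G) (v : V) : Prop :=
  v ∈ A.verts ∧ G.ty v = .wire ∧ ∀ e ∈ A.edges, G.t e = v → G.ty (G.s e) = .bang

/-- An output of a subgraph: a wire-vertex of the subgraph with no out-edges
inside the subgraph. -/
def IsOutput (A : Sub G) (v : V) : Prop :=
  v ∈ A.verts ∧ G.ty v = .wire ∧ ∀ e ∈ A.edges, G.s e ≠ v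

/-- `A` is open in `H`: `In(H∖A) ⊆ In(H)` and `Out(H∖A) ⊆ Out(H)`. -/
def IsOpenIn (A H : Sub G) : Prop :=
  (∀ v, (H.minus A).IsInput v → H.IsInput v) ∧
  (∀ v, (H.minus A).IsOutput v → H.IsOutput v)

/-- `A` is an open subgraph of `G`. -/
def IsOpen (A : Sub G) : Prop := A.IsOpenIn (top G)

end Sub

/-- The full subgraph on a vertex set, as a subgraph. -/
def fullSub (G : TGraph V E) (S : Set V) : Sub G :=
  ⟨S, {e | G.s e ∈ S ∧ G.t e ∈ S}, fun _ he => he.1, fun _ he => he.2⟩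

/-- `B(b)` : the `!`-box of `b`, i.e. the full subgraph on the successors of `b`. -/
def bbox (G : TGraph V E) (b : V) : Sub G := G.fullSub (G.bsucc b)

/-- Edges of `Σ(G)`, the full subgraph on node- and wire-vertices. -/
def sigmaEdges (G : TGraph V E) : Set E :=
  {e | G.ty (G.s e) ≠ .bang ∧ G.ty (G.t e) ≠ .bang}

/-- Edges of `β(G)`, the full subgraph on `!`-vertices. -/
def betaEdges (G : TGraph V E) : Set E :=
  {e | G.ty (G.s e) = .bang ∧ G.ty (G.t e) = .bang}

/-- `Σ(G)` is a string graph. -/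
def SigmaIsStringGraph (G : TGraph V E) : Prop :=
  G.NoNodeNode ∧ ∀ v, G.ty v = .wire →
    (∀ e₁ e₂, e₁ ∈ G.sigmaEdges → e₂ ∈ G.sigmaEdges → G.t e₁ = v → G.t e₂ = v → e₁ = e₂) ∧
    (∀ e₁ e₂, e₁ ∈ G.sigmaEdges → e₂ ∈ G.sigmaEdges → G.s e₁ = v → G.s e₂ = v → e₁ = e₂)

/-- `β(G)` is posetal: simple and, as a relation on `!`-vertices, a partial order. -/
def BetaPosetal (G : TGraph V E) : Prop :=
  (∀ e₁ e₂, e₁ ∈ G.betaEdges → e₂ ∈ G.betaEdges →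
    G.s e₁ = G.s e₂ → G.t e₁ = G.t e₂ → e₁ = e₂) ∧
  (∀ b, G.ty b = .bang → b ∈ G.bsucc b) ∧
  (∀ b b', G.ty b = .bang → G.ty b' = .bang →
    b' ∈ G.bsucc b → b ∈ G.bsucc b' → b = b') ∧
  (∀ a b c, G.ty a = .bang → G.ty b = .bang → G.ty c = .bang →
    b ∈ G.bsucc a → c ∈ G.bsucc b → c ∈ G.bsucc a)

/-- A pattern graph. -/
def IsPattern (G : TGraph V E) : Prop :=
  G.IsG3 ∧ G.SigmaIsStringGraph ∧ G.BetaPosetal ∧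
  (∀ b, G.ty b = .bang → (G.bbox b).IsOpen) ∧
  (∀ b b', G.ty b = .bang → G.ty b' = .bang → b' ∈ G.bsucc b →
    G.bsucc b' ⊆ G.bsucc b)

end TGraph

/-- If `O` and `O'` are open subgraphs of a string graph `G`,
then `O ∩ O'` is an open subgraph of `G`. -/
theorem statement_1 {V E : Type} {G : TGraph V E} (hG : G.IsStringGraph)
    (O O' : TGraph.Sub G) (hO : O.IsOpen) (hO' : O'.IsOpen) :
    (O.inter O').IsOpen := by
  constructor
  · intro v hv
    obtain ⟨⟨-, hvo⟩, hw, he⟩ := hv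
    rcases not_and_or.mp hvo with h | h
    · exact hO.1 v ⟨⟨trivial, h⟩, hw, fun e he' hte =>
        he e ⟨trivial, fun hs => he'.2.1 hs.1, fun ht => he'.2.2 ht.1⟩ hte⟩
    · exact hO'.1 v ⟨⟨trivial, h⟩, hw, fun e he' hte =>
        he e ⟨trivial, fun hs => he'.2.1 hs.2, fun ht => he'.2.2 ht.2⟩ hte⟩
  · intro v hv
    obtain ⟨⟨-, hvo⟩, hw, he⟩ := hv
    rcases not_and_or.mp hvo with h | h
    · exact hO.2 v ⟨⟨trivial, h⟩, hw, fun e he' =>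
        he e ⟨trivial, fun hs => he'.2.1 hs.1, fun ht => he'.2.2 ht.1⟩⟩
    · exact hO'.2 v ⟨⟨trivial, h⟩, hw, fun e he' =>
        he e ⟨trivial, fun hs => he'.2.1 hs.2, fun ht => he'.2.2 ht.2⟩⟩
end

section
/- If O and O' are open subgraphs of a string graph G, then O ∪ O' is an open subgraph of G. -/
/-- If `O` and `O'` are open subgraphs of a string graph `G`,
then `O ∪ O'` is an open subgraph of `G`. -/
theorem statement_2 {V E : Type} {G : TGraph V E} (hG : G.IsStringGraph)
    (O O' : TGraph.Sub G) (hO : O.IsOpen) (hO' : O'.IsOpen) :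
    (O.union O').IsOpen := by
  obtain ⟨⟨hnn, hnb⟩, huniq⟩ := hG
  constructor
  · rintro v ⟨⟨-, hv⟩, hw, hin⟩
    refine ⟨trivial, hw, ?_⟩
    intro e _ hte
    by_cases hs : G.s e ∈ O.verts
    · have hv' : ((TGraph.Sub.top G).minus O).IsInput v := by
        refine ⟨⟨trivial, fun h => hv (Or.inl h)⟩, hw, ?_⟩
        intro e' he' hte'
        have he : e' = e := (huniq v hw).1 e' e hte' hte
        exact absurd hs (he ▸ he'.2.1)
      exact (hO.1 v hv').2.2 e trivial hte
    · by_cases hs' : G.s e ∈ O'.verts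
      · have hv' : ((TGraph.Sub.top G).minus O').IsInput v := by
          refine ⟨⟨trivial, fun h => hv (Or.inr h)⟩, hw, ?_⟩
          intro e' he' hte'
          have he : e' = e := (huniq v hw).1 e' e hte' hte
          exact absurd hs' (he ▸ he'.2.1)
        exact (hO'.1 v hv').2.2 e trivial hte
      · exact hin e ⟨trivial, fun h => h.elim hs hs', fun h => hv (hte ▸ h)⟩ hte
  · rintro v ⟨⟨-, hv⟩, hw, hout⟩
    refine ⟨trivial, hw, ?_⟩
    intro e _ hse
    by_cases ht : G.t e ∈ O.verts
    · have hv' : ((TGraph.Sub.top G).minus O).IsOutput v := by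
        refine ⟨⟨trivial, fun h => hv (Or.inl h)⟩, hw, ?_⟩
        intro e' he' hse'
        have he : e' = e := (huniq v hw).2 e' e hse' hse
        exact absurd ht (he ▸ he'.2.2)
      exact (hO.2 v hv').2.2 e trivial hse
    · by_cases ht' : G.t e ∈ O'.verts
      · have hv' : ((TGraph.Sub.top G).minus O').IsOutput v := by
          refine ⟨⟨trivial, fun h => hv (Or.inr h)⟩, hw, ?_⟩
          intro e' he' hse'
          have he : e' = e := (huniq v hw).2 e' e hse' hse
          exact absurd ht' (he ▸ he'.2.2)
        exact (hO'.2 v hv').2.2 e trivial hse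
      · exact hout e ⟨trivial, fun h => hv (hse ▸ h), fun h => h.elim ht ht'⟩ hse
end

section
/- If O is an open subgraph of a string graph G and H is an arbitrary subgraph of G, then H ∩ O is an open subgraph of H. -/
/-- If `O` is an open subgraph of a string graph `G` and `H` is
an arbitrary subgraph of `G`, then `H ∩ O` is an open subgraph of `H`. -/
theorem statement_3 {V E : Type} {G : TGraph V E} (hG : G.IsStringGraph)
    (O H : TGraph.Sub G) (hO : O.IsOpen) :
    (H.inter O).IsOpenIn H := by
  obtain ⟨⟨hnn, hnb⟩, huniq⟩ := hG
  obtain ⟨hOin, hOout⟩ := hO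
  constructor
  · rintro v ⟨⟨hvH, hvO'⟩, hw, hin⟩
    have hvO : v ∉ O.verts := fun h => hvO' ⟨hvH, h⟩
    refine ⟨hvH, hw, fun e he hte => ?_⟩
    exfalso
    by_cases hs : G.s e ∈ H.verts ∩ O.verts
    · -- source in O; use openness of O in G
      have hvin : (TGraph.Sub.top G).IsInput v := by
        apply hOin
        refine ⟨⟨trivial, hvO⟩, hw, fun e' he' hte' => ?_⟩
        have : e' = e := (huniq v hw).1 e' e hte' hte
        exact absurd (this ▸ hs.2) he'.2.1
      exact hnb _ (hvin.2.2 e trivial hte)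
    · -- edge survives in H∖(H∩O), so its source is bang: contradiction
      have : G.ty (G.s e) = .bang := by
        refine hin e ⟨he, hs, fun h => hvO' (hte ▸ h)⟩ hte
      exact hnb _ this
  · rintro v ⟨⟨hvH, hvO'⟩, hw, hout⟩
    have hvO : v ∉ O.verts := fun h => hvO' ⟨hvH, h⟩
    refine ⟨hvH, hw, fun e he hse => ?_⟩
    by_cases ht : G.t e ∈ H.verts ∩ O.verts
    · -- target in O; use openness of O in G
      have hvout : (TGraph.Sub.top G).IsOutput v := by
        apply hOout
        refine ⟨⟨trivial, hvO⟩, hw, fun e' he' hse' => ?_⟩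
        have : e' = e := (huniq v hw).2 e' e hse' hse
        exact absurd (this ▸ ht.2) he'.2.2
      exact hvout.2.2 e trivial hse
    · exact hout e ⟨he, fun h => hvO' (hse ▸ h), ht⟩ hse
end

section
/- Every full subgraph of a pattern graph is a pattern graph. -/
namespace TGraph

variable {V E : Type} {G : TGraph V E} {S : Set V}

lemma restrict_bsucc_iff (b v : {x : V // x ∈ S}) :
    v ∈ (G.restrict S).bsucc b ↔ v.1 ∈ G.bsucc b.1 := by
  constructor
  · rintro ⟨e, hs, ht⟩
    exact ⟨e.1, congrArg Subtype.val hs, congrArg Subtype.val ht⟩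
  · rintro ⟨e, hs, ht⟩
    exact ⟨⟨e, by rw [hs]; exact b.2, by rw [ht]; exact v.2⟩,
      Subtype.ext hs, Subtype.ext ht⟩

/-- The main technical lemma: !-boxes of the restriction are open. -/
lemma restrict_bbox_open (hG : G.IsPattern) (b : {x : V // x ∈ S})
    (hb : (G.restrict S).ty b = .bang) : ((G.restrict S).bbox b).IsOpen := by
  obtain ⟨⟨hNN, hG3⟩, ⟨-, hStr⟩, -, hOpen, -⟩ := hG
  have hbG : G.ty b.1 = .bang := hb
  constructor
  · -- inputs
    rintro v ⟨⟨-, hvB⟩, hvw, hin⟩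
    refine ⟨trivial, hvw, ?_⟩
    rintro e - hte
    by_contra hnb
    have hvw' : G.ty v.1 = .wire := hvw
    have htev : G.t e.1 = v.1 := congrArg Subtype.val hte
    have hvB' : v.1 ∉ G.bsucc b.1 := fun h => hvB ((restrict_bsucc_iff b v).2 h)
    -- the source of e must lie in the !-box of b in G
    have hseB : G.s e.1 ∈ G.bsucc b.1 := by
      by_contra hse
      exact hnb (hin e ⟨trivial, fun h => hse ((restrict_bsucc_iff b _).1 h),
        fun h => hvB (hte ▸ h)⟩ hte)
    have heSig : e.1 ∈ G.sigmaEdges := ⟨hnb, by rw [htev, hvw']; simp⟩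
    -- v is an input of G ∖ B(b)
    have hvin : ((Sub.top G).minus (G.bbox b.1)).IsInput v.1 := by
      refine ⟨⟨trivial, hvB'⟩, hvw', ?_⟩
      rintro e' ⟨-, hs', -⟩ ht'
      by_contra hnb'
      have : e' = e.1 := (hStr v.1 hvw').1 e' e.1
        ⟨hnb', by rw [ht', hvw']; simp⟩ heSig ht' htev
      exact hs' (this ▸ hseB)
    have := ((hOpen b.1 hbG).1 v.1 hvin).2.2 e.1 trivial htev
    exact hnb this
  · -- outputs
    rintro v ⟨⟨-, hvB⟩, hvw, hout⟩
    refine ⟨trivial, hvw, ?_⟩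
    rintro e - hse
    have hvw' : G.ty v.1 = .wire := hvw
    have hsev : G.s e.1 = v.1 := congrArg Subtype.val hse
    have hvB' : v.1 ∉ G.bsucc b.1 := fun h => hvB ((restrict_bsucc_iff b v).2 h)
    have hsnb : G.ty (G.s e.1) ≠ .bang := by rw [hsev, hvw']; simp
    have htnb : G.ty (G.t e.1) ≠ .bang := fun h => hsnb (hG3 e.1 h)
    have heSig : e.1 ∈ G.sigmaEdges := ⟨hsnb, htnb⟩
    -- the target of e must lie in the !-box of b in G
    have hteB : G.t e.1 ∈ G.bsucc b.1 := by
      by_contra hte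
      exact hout e ⟨trivial, fun h => hvB (hse ▸ h),
        fun h => hte ((restrict_bsucc_iff b _).1 h)⟩ hse
    -- v is an output of G ∖ B(b)
    have hvout : ((Sub.top G).minus (G.bbox b.1)).IsOutput v.1 := by
      refine ⟨⟨trivial, hvB'⟩, hvw', ?_⟩
      rintro e' ⟨-, -, ht'⟩ hs'
      have hsnb' : G.ty (G.s e') ≠ .bang := by rw [hs', hvw']; simp
      have : e' = e.1 := (hStr v.1 hvw').2 e' e.1
        ⟨hsnb', fun h => hsnb' (hG3 e' h)⟩ heSig hs' hsev
      exact ht' (this ▸ hteB)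
    exact ((hOpen b.1 hbG).2 v.1 hvout).2.2 e.1 trivial hsev

end TGraph

/-- Every full subgraph of a pattern graph is a pattern graph. -/
theorem statement_4 {V E : Type} {G : TGraph V E} (hG : G.IsPattern)
    (S : Set V) : (G.restrict S).IsPattern := by
  obtain ⟨⟨hNN, hG3⟩, ⟨-, hStr⟩, ⟨hSimp, hRefl, hAnti, hTrans⟩, hOpen, hMono⟩ := hG
  refine ⟨⟨fun e h => hNN e.1 h, fun e h => hG3 e.1 h⟩, ?_, ?_, ?_, ?_⟩
  · -- Σ is a string graph
    refine ⟨fun e h => hNN e.1 h, fun v hv => ⟨?_, ?_⟩⟩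
    · intro e₁ e₂ h₁ h₂ ht₁ ht₂
      exact Subtype.ext ((hStr v.1 hv).1 e₁.1 e₂.1 h₁ h₂
        (congrArg Subtype.val ht₁) (congrArg Subtype.val ht₂))
    · intro e₁ e₂ h₁ h₂ hs₁ hs₂
      exact Subtype.ext ((hStr v.1 hv).2 e₁.1 e₂.1 h₁ h₂
        (congrArg Subtype.val hs₁) (congrArg Subtype.val hs₂))
  · -- β is posetal
    refine ⟨?_, ?_, ?_, ?_⟩
    · intro e₁ e₂ h₁ h₂ hs ht
      exact Subtype.ext (hSimp e₁.1 e₂.1 h₁ h₂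
        (congrArg Subtype.val hs) (congrArg Subtype.val ht))
    · intro b hb
      exact (TGraph.restrict_bsucc_iff b b).2 (hRefl b.1 hb)
    · intro b b' hb hb' h₁ h₂
      exact Subtype.ext (hAnti b.1 b'.1 hb hb'
        ((TGraph.restrict_bsucc_iff _ _).1 h₁) ((TGraph.restrict_bsucc_iff _ _).1 h₂))
    · intro a b c ha hb hc h₁ h₂
      exact (TGraph.restrict_bsucc_iff a c).2 (hTrans a.1 b.1 c.1 ha hb hc
        ((TGraph.restrict_bsucc_iff _ _).1 h₁) ((TGraph.restrict_bsucc_iff _ _).1 h₂))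
  · exact fun b hb => TGraph.restrict_bbox_open
      ⟨⟨hNN, hG3⟩, ⟨hNN, hStr⟩, ⟨hSimp, hRefl, hAnti, hTrans⟩, hOpen, hMono⟩ b hb
  · intro b b' hb hb' hbb' v hv
    exact (TGraph.restrict_bsucc_iff b v).2
      (hMono b.1 b'.1 hb hb' ((TGraph.restrict_bsucc_iff _ _).1 hbb')
        ((TGraph.restrict_bsucc_iff _ _).1 hv))
end

section
/- Let G be a pattern graph, let b and b' be !-vertices of G with b' ∉ B(b), and let H = COPY_b(G). Since b' lies in G∖B(b), the two pushout maps G → H agree on b', determining a !-vertex of H also denoted b'. Then the !-box B_H(b') of b' in H is an open subgraph of H. -/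
namespace TGraph

variable {V E : Type}

open Classical in
/-- The canonical map into the vertex set of `COPY_b(G)`: vertices of `B(b)`
go to the second copy, all other vertices to the (shared) first copy. -/
noncomputable def embed (G : TGraph V E) (b v : V) : V ⊕ {w : V // w ∈ G.bsucc b} :=
  if h : v ∈ G.bsucc b then Sum.inr ⟨v, h⟩ else Sum.inl v

theorem embed_of_mem (G : TGraph V E) {b v : V} (h : v ∈ G.bsucc b) :
    G.embed b v = Sum.inr ⟨v, h⟩ := by
  simp [embed, h]

theorem embed_of_not_mem (G : TGraph V E) {b v : V} (h : v ∉ G.bsucc b) :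
    G.embed b v = Sum.inl v := by
  simp [embed, h]

/-- `COPY_b(G)` : the pushout of the inclusion `G∖B(b) ↪ G` along itself,
computed concretely: two copies of `G` glued along `G∖B(b)`. -/
noncomputable def copyGraph (G : TGraph V E) (b : V) :
    TGraph (V ⊕ {w : V // w ∈ G.bsucc b})
      (E ⊕ {e : E // G.s e ∈ G.bsucc b ∨ G.t e ∈ G.bsucc b}) where
  s := Sum.elim (fun e => Sum.inl (G.s e)) (fun e => G.embed b (G.s e.1))
  t := Sum.elim (fun e => Sum.inl (G.t e)) (fun e => G.embed b (G.t e.1))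
  ty := Sum.elim G.ty fun v => G.ty v.1

/-- `DROP_b(G) = G∖{b}`. -/
def dropGraph (G : TGraph V E) (b : V) :=
  G.restrict {v : V | v ≠ b}

/-- `KILL_b(G) = G∖B(b)`. -/
def killGraph (G : TGraph V E) (b : V) :=
  G.restrict {v : V | v ∉ G.bsucc b}

end TGraph
namespace TGraph

variable {V E : Type} {G : TGraph V E}

theorem embed_eq_inl {b v w : V} (h : G.embed b v = Sum.inl w) :
    v = w ∧ v ∉ G.bsucc b := by
  by_cases hv : v ∈ G.bsucc b
  · rw [G.embed_of_mem hv] at h; exact absurd h (by simp)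
  · rw [G.embed_of_not_mem hv] at h; exact ⟨Sum.inl.inj h, hv⟩

theorem embed_eq_inr {b v : V} {w : {w : V // w ∈ G.bsucc b}}
    (h : G.embed b v = Sum.inr w) : v = w.1 := by
  by_cases hv : v ∈ G.bsucc b
  · rw [G.embed_of_mem hv] at h
    exact congrArg Subtype.val (Sum.inr.inj h)
  · rw [G.embed_of_not_mem hv] at h; exact absurd h (by simp)

theorem mem_copy_bbox_inl {b b' : V} (hnb : b' ∉ G.bsucc b) (w : V) :
    Sum.inl w ∈ ((G.copyGraph b).bbox (Sum.inl b')).verts ↔ w ∈ G.bsucc b' := by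
  constructor
  · rintro ⟨e, hs, ht⟩
    cases e with
    | inl f =>
      exact ⟨f, Sum.inl.inj hs, Sum.inl.inj ht⟩
    | inr f =>
      exact ⟨f.1, (embed_eq_inl hs).1, (embed_eq_inl ht).1⟩
  · rintro ⟨f, hs, ht⟩
    exact ⟨Sum.inl f, congrArg Sum.inl hs, congrArg Sum.inl ht⟩

theorem mem_copy_bbox_inr {b b' : V} (hnb : b' ∉ G.bsucc b)
    (w : {w : V // w ∈ G.bsucc b}) :
    Sum.inr w ∈ ((G.copyGraph b).bbox (Sum.inl b')).verts ↔ w.1 ∈ G.bsucc b' := by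
  constructor
  · rintro ⟨e, hs, ht⟩
    cases e with
    | inl f => exact absurd ht (by simp [copyGraph])
    | inr f =>
      exact ⟨f.1, (embed_eq_inl hs).1, embed_eq_inr ht⟩
  · rintro ⟨f, hs, ht⟩
    refine ⟨Sum.inr ⟨f, Or.inr (ht ▸ w.2)⟩, ?_, ?_⟩
    · show G.embed b (G.s f) = _
      rw [hs, G.embed_of_not_mem hnb]
    · show G.embed b (G.t f) = _
      rw [G.embed_of_mem (ht ▸ w.2)]
      exact congrArg Sum.inr (Subtype.ext ht)

theorem mem_copy_bbox_embed {b b' : V} (hnb : b' ∉ G.bsucc b) (v : V) :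
    G.embed b v ∈ ((G.copyGraph b).bbox (Sum.inl b')).verts ↔ v ∈ G.bsucc b' := by
  by_cases hv : v ∈ G.bsucc b
  · rw [G.embed_of_mem hv, mem_copy_bbox_inr hnb]
  · rw [G.embed_of_not_mem hv, mem_copy_bbox_inl hnb]

theorem ty_embed {b : V} (v : V) : (G.copyGraph b).ty (G.embed b v) = G.ty v := by
  by_cases hv : v ∈ G.bsucc b
  · rw [G.embed_of_mem hv]; rfl
  · rw [G.embed_of_not_mem hv]; rfl

end TGraph
open TGraph in

/-- Let `G` be a pattern graph, `b, b'` `!`-vertices of `G` with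
`b' ∉ B(b)`, and `H = COPY_b(G)`.  Since `b'` lies in `G∖B(b)`, the two
pushout maps agree on it, determining the vertex `Sum.inl b'` of `H`.  Then
the `!`-box of `b'` in `H` is an open subgraph of `H`. -/
theorem statement_5 {V E : Type} {G : TGraph V E} (hG : G.IsPattern)
    (b b' : V) (hb : G.ty b = .bang) (hb' : G.ty b' = .bang)
    (hnb : b' ∉ G.bsucc b) :
    ((G.copyGraph b).bbox (Sum.inl b')).IsOpen := by
  obtain ⟨-, -, -, hopen, -⟩ := hG
  have hob := hopen b' hb'
  constructor
  · rintro v ⟨⟨-, hvA⟩, hwire, hmin⟩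
    cases v with
    | inl w =>
      have hw : w ∉ G.bsucc b' := fun h => hvA ((mem_copy_bbox_inl hnb w).2 h)
      have winp : (Sub.top G).IsInput w := by
        refine hob.1 w ⟨⟨trivial, hw⟩, hwire, ?_⟩
        intro g hg htg
        exact hmin (Sum.inl g)
          ⟨trivial, fun h => hg.2.1 ((mem_copy_bbox_inl hnb _).1 h),
            fun h => hg.2.2 ((mem_copy_bbox_inl hnb _).1 h)⟩
          (congrArg Sum.inl htg)
      refine ⟨trivial, hwire, ?_⟩
      rintro (f | f) - hte
      · exact winp.2.2 f trivial (Sum.inl.inj hte)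
      · show (G.copyGraph b).ty (G.embed b (G.s f.1)) = VTy.bang
        rw [ty_embed]
        exact winp.2.2 f.1 trivial (embed_eq_inl hte).1
    | inr w =>
      have hw : w.1 ∉ G.bsucc b' := fun h => hvA ((mem_copy_bbox_inr hnb w).2 h)
      have winp : (Sub.top G).IsInput w.1 := by
        refine hob.1 w.1 ⟨⟨trivial, hw⟩, hwire, ?_⟩
        intro g hg htg
        refine (ty_embed (G.s g)).symm.trans (hmin (Sum.inr ⟨g, Or.inr (htg ▸ w.2)⟩)
          ⟨trivial, fun h => hg.2.1 ((mem_copy_bbox_embed hnb _).1 h),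
            fun h => hg.2.2 ((mem_copy_bbox_embed hnb _).1 h)⟩ ?_)
        show G.embed b (G.t g) = _
        rw [G.embed_of_mem (htg ▸ w.2)]
        exact congrArg Sum.inr (Subtype.ext htg)
      refine ⟨trivial, hwire, ?_⟩
      rintro (f | f) - hte
      · exact absurd hte (by simp [copyGraph])
      · show (G.copyGraph b).ty (G.embed b (G.s f.1)) = VTy.bang
        rw [ty_embed]
        exact winp.2.2 f.1 trivial (embed_eq_inr hte)
  · rintro v ⟨⟨-, hvA⟩, hwire, hmin⟩
    cases v with
    | inl w =>
      have hw : w ∉ G.bsucc b' := fun h => hvA ((mem_copy_bbox_inl hnb w).2 h)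
      have wout : (Sub.top G).IsOutput w := by
        refine hob.2 w ⟨⟨trivial, hw⟩, hwire, ?_⟩
        intro g hg hsg
        exact hmin (Sum.inl g)
          ⟨trivial, fun h => hg.2.1 ((mem_copy_bbox_inl hnb _).1 h),
            fun h => hg.2.2 ((mem_copy_bbox_inl hnb _).1 h)⟩
          (congrArg Sum.inl hsg)
      refine ⟨trivial, hwire, ?_⟩
      rintro (f | f) - hse
      · exact wout.2.2 f trivial (Sum.inl.inj hse)
      · exact wout.2.2 f.1 trivial (embed_eq_inl hse).1
    | inr w =>
      have hw : w.1 ∉ G.bsucc b' := fun h => hvA ((mem_copy_bbox_inr hnb w).2 h)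
      have wout : (Sub.top G).IsOutput w.1 := by
        refine hob.2 w.1 ⟨⟨trivial, hw⟩, hwire, ?_⟩
        intro g hg hsg
        refine hmin (Sum.inr ⟨g, Or.inl (hsg ▸ w.2)⟩)
          ⟨trivial, fun h => hg.2.1 ((mem_copy_bbox_embed hnb _).1 h),
            fun h => hg.2.2 ((mem_copy_bbox_embed hnb _).1 h)⟩ ?_
        show G.embed b (G.s g) = _
        rw [G.embed_of_mem (hsg ▸ w.2)]
        exact congrArg Sum.inr (Subtype.ext hsg)
      refine ⟨trivial, hwire, ?_⟩
      rintro (f | f) - hse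
      · exact absurd hse (by simp [copyGraph])
      · exact wout.2.2 f.1 trivial (embed_eq_inr hse)
end

section
/- Let G be a pattern graph and b a !-vertex of G. Then COPY_b(G), DROP_b(G) and KILL_b(G) are all pattern graphs. If moreover b' is a !-vertex of G with B↑(b)∖b = B↑(b')∖b' and B(b) ∩ B(b') = ∅, then MERGE_{b,b'}(G) is also a pattern graph. -/
namespace TGraph

variable {V E : Type}

/-- The vertex identification performed by `MERGE_{b,b'}`: `b` and `b'` are
identified. -/
def mergeVRel (b b' : V) (v₁ v₂ : V) : Prop :=
  v₁ = v₂ ∨ (v₁ = b ∧ v₂ = b') ∨ (v₁ = b' ∧ v₂ = b)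

/-- The edges of `B↑(b)`, the full subgraph on the predecessors of `b`. -/
def upEdges (G : TGraph V E) (b : V) : Set E :=
  {e | G.s e ∈ G.bpred b ∧ G.t e ∈ G.bpred b}

/-- The edge identification performed by `MERGE_{b,b'}`: an edge of `B↑(b)` is
identified with the corresponding edge of `B↑(b')`. -/
def mergeERel (G : TGraph V E) (b b' : V) (e₁ e₂ : E) : Prop :=
  e₁ = e₂ ∨
    (e₁ ∈ G.upEdges b ∧ e₂ ∈ G.upEdges b' ∧
      Quot.mk (mergeVRel b b') (G.s e₁) = Quot.mk (mergeVRel b b') (G.s e₂) ∧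
      Quot.mk (mergeVRel b b') (G.t e₁) = Quot.mk (mergeVRel b b') (G.t e₂)) ∨
    (e₁ ∈ G.upEdges b' ∧ e₂ ∈ G.upEdges b ∧
      Quot.mk (mergeVRel b b') (G.s e₁) = Quot.mk (mergeVRel b b') (G.s e₂) ∧
      Quot.mk (mergeVRel b b') (G.t e₁) = Quot.mk (mergeVRel b b') (G.t e₂))

open Classical in
/-- `MERGE_{b,b'}(G)` : the coequaliser of the inclusion `B↑(b) ↪ G` and the
composite of the canonical isomorphism `B↑(b) ≅ B↑(b')` with `B↑(b') ↪ G`,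
computed concretely as a quotient of `G`. -/
noncomputable def mergeGraph (G : TGraph V E) (b b' : V) :
    TGraph (Quot (mergeVRel b b')) (Quot (G.mergeERel b b')) where
  s := Quot.lift (fun e => Quot.mk _ (G.s e)) (by
    intro e₁ e₂ h
    rcases h with h | h | h
    · rw [h]
    · exact h.2.2.1
    · exact h.2.2.1)
  t := Quot.lift (fun e => Quot.mk _ (G.t e)) (by
    intro e₁ e₂ h
    rcases h with h | h | h
    · rw [h]
    · exact h.2.2.2
    · exact h.2.2.2)
  ty := Quot.lift (fun v => if v = b' then G.ty b else G.ty v) (by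
    intro v₁ v₂ h
    rcases h with h | ⟨h1, h2⟩ | ⟨h1, h2⟩
    · rw [h]
    · subst h1; subst h2; simp
    · subst h1; subst h2; simp)

open Classical in
theorem mergeGraph_ty_mk (G : TGraph V E) (b b' v : V) :
    (G.mergeGraph b b').ty (Quot.mk _ v) = if v = b' then G.ty b else G.ty v := rfl

end TGraph


namespace TGraph

variable {V E W F : Type}

/-- A local form of openness of the full subgraph on `S`: following an edge from a
non-`!`-vertex of `S` into a wire, or backwards from `S` to a wire, stays inside `S`.
For pattern graphs it is equivalent to `(G.fullSub S).IsOpen`, but unlike the latter it is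
preserved by preimages along homomorphisms and by unions. -/
def IsOpenSet (G : TGraph V E) (S : Set V) : Prop :=
  (∀ e, G.s e ∈ S → G.ty (G.t e) = .wire → G.ty (G.s e) ≠ .bang → G.t e ∈ S) ∧
  (∀ e, G.t e ∈ S → G.ty (G.s e) = .wire → G.s e ∈ S)

section IsOpenSet

variable {G : TGraph V E}

theorem IsOpenSet.isOpen_fullSub {S : Set V} (h : G.IsOpenSet S) : (G.fullSub S).IsOpen := by
  refine ⟨fun v ⟨⟨_, hvS⟩, hv, hin⟩ => ⟨trivial, hv, fun e _ hte => ?_⟩,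
    fun v ⟨⟨_, hvS⟩, hv, hout⟩ => ⟨trivial, hv, fun e _ hse => ?_⟩⟩
  · subst hte
    by_contra hns
    by_cases hs : G.s e ∈ S
    · exact hvS (h.1 e hs hv hns)
    · exact hns (hin e ⟨trivial, hs, hvS⟩ rfl)
  · subst hse
    by_cases ht : G.t e ∈ S
    · exact hvS (h.2 e ht hv)
    · exact hout e ⟨trivial, hvS, ht⟩ rfl

theorem isOpenSet_of_isOpen_fullSub (h3 : G.IsG3) (hstr : G.SigmaIsStringGraph) {S : Set V}
    (h : (G.fullSub S).IsOpen) : G.IsOpenSet S := by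
  refine ⟨fun e hs hwire hns => ?_, fun e ht hwire => ?_⟩
  · by_contra ht
    -- `e` is the only Σ-edge into `G.t e`, so `G.t e` is an input of `G ∖ S`
    refine hns ((h.1 (G.t e) ⟨⟨trivial, ht⟩, hwire, fun e' he' hte' => ?_⟩).2.2 e trivial rfl)
    by_contra hns'
    have he : e = e' := (hstr.2 _ hwire).1 e e' ⟨hns, by simp [hwire]⟩
      ⟨hns', by simp [hte', hwire]⟩ rfl hte'
    exact he'.2.1 (he ▸ hs)
  · by_contra hs
    -- `e` is the only edge out of `G.s e`, so `G.s e` is an output of `G ∖ S`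
    refine (h.2 (G.s e) ⟨⟨trivial, hs⟩, hwire, fun e' he' hse' => ?_⟩).2.2 e trivial rfl
    have hnt : ∀ e'', G.s e'' = G.s e → G.ty (G.t e'') ≠ .bang := fun e'' h'' hbang => by
      simpa [h'', hwire] using h3.2 e'' hbang
    have he : e = e' := (hstr.2 _ hwire).2 e e' ⟨by simp [hwire], hnt e rfl⟩
      ⟨by simp [hse', hwire], hnt e' hse'⟩ rfl hse'
    exact he'.2.2 (he ▸ ht)

theorem isOpenSet_biUnion {ι : Type*} {I : Set ι} {S : ι → Set V}
    (h : ∀ i ∈ I, G.IsOpenSet (S i)) : G.IsOpenSet (⋃ i ∈ I, S i) := by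
  refine ⟨fun e hs hwire hns => ?_, fun e ht hwire => ?_⟩
  · obtain ⟨i, hi, hsi⟩ := Set.mem_iUnion₂.1 hs
    exact Set.mem_iUnion₂.2 ⟨i, hi, (h i hi).1 e hsi hwire hns⟩
  · obtain ⟨i, hi, hti⟩ := Set.mem_iUnion₂.1 ht
    exact Set.mem_iUnion₂.2 ⟨i, hi, (h i hi).2 e hti hwire⟩

theorem IsOpenSet.of_subset {P S : Set V} (hP : G.IsOpenSet P) (hSP : S ⊆ P)
    (hS : ∀ e, G.s e ∈ P → G.t e ∈ P → (G.s e ∈ S ↔ G.t e ∈ S)) : G.IsOpenSet S := by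
  refine ⟨fun e hs hwire hns => ?_, fun e ht hwire => ?_⟩
  · exact (hS e (hSP hs) (hP.1 e (hSP hs) hwire hns)).1 hs
  · exact (hS e (hP.2 e (hSP ht) hwire) (hSP ht)).2 ht

end IsOpenSet

structure Hom (G : TGraph V E) (H : TGraph W F) where
  vmap : V → W
  emap : E → F
  s_emap : ∀ e, H.s (emap e) = vmap (G.s e)
  t_emap : ∀ e, H.t (emap e) = vmap (G.t e)
  ty_vmap : ∀ v, H.ty (vmap v) = G.ty v

namespace Hom

variable {G : TGraph V E} {H : TGraph W F} (f : Hom G H)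

theorem noNodeNode (f : Hom G H) (hH : H.NoNodeNode) : G.NoNodeNode := fun e => by
  simpa only [f.s_emap, f.t_emap, f.ty_vmap] using hH (f.emap e)

theorem noNodeNode_of_surjective (hf : Function.Surjective f.emap) (hG : G.NoNodeNode) :
    H.NoNodeNode := fun e' => by
  obtain ⟨e, rfl⟩ := hf e'
  simpa only [f.s_emap, f.t_emap, f.ty_vmap] using hG e

theorem isG3 (f : Hom G H) (hH : H.IsG3) : G.IsG3 :=
  ⟨f.noNodeNode hH.1, fun e => by simpa only [f.s_emap, f.t_emap, f.ty_vmap] using hH.2 (f.emap e)⟩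

theorem isG3_of_surjective (hf : Function.Surjective f.emap) (hG : G.IsG3) : H.IsG3 := by
  refine ⟨f.noNodeNode_of_surjective hf hG.1, fun e' => ?_⟩
  obtain ⟨e, rfl⟩ := hf e'
  simpa only [f.s_emap, f.t_emap, f.ty_vmap] using hG.2 e

theorem emap_mem_sigmaEdges {e : E} : f.emap e ∈ H.sigmaEdges ↔ e ∈ G.sigmaEdges := by
  simp only [sigmaEdges, Set.mem_ofPred_eq, f.s_emap, f.t_emap, f.ty_vmap]

theorem emap_mem_betaEdges {e : E} : f.emap e ∈ H.betaEdges ↔ e ∈ G.betaEdges := by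
  simp only [betaEdges, Set.mem_ofPred_eq, f.s_emap, f.t_emap, f.ty_vmap]

theorem sigmaIsStringGraph_of_injective (hf : Function.Injective f.emap)
    (hH : H.SigmaIsStringGraph) : G.SigmaIsStringGraph := by
  refine ⟨f.noNodeNode hH.1, fun v hv => ?_⟩
  have hv' : H.ty (f.vmap v) = .wire := by rw [f.ty_vmap, hv]
  refine ⟨fun e₁ e₂ h₁ h₂ ht₁ ht₂ => hf ?_, fun e₁ e₂ h₁ h₂ hs₁ hs₂ => hf ?_⟩
  · exact (hH.2 _ hv').1 _ _ (f.emap_mem_sigmaEdges.2 h₁) (f.emap_mem_sigmaEdges.2 h₂)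
      (by rw [f.t_emap, ht₁]) (by rw [f.t_emap, ht₂])
  · exact (hH.2 _ hv').2 _ _ (f.emap_mem_sigmaEdges.2 h₁) (f.emap_mem_sigmaEdges.2 h₂)
      (by rw [f.s_emap, hs₁]) (by rw [f.s_emap, hs₂])

theorem sigmaIsStringGraph_of_surjective (hf : Function.Surjective f.emap)
    (hinj : ∀ v w, G.ty w = .wire → f.vmap v = f.vmap w → v = w)
    (hG : G.SigmaIsStringGraph) : H.SigmaIsStringGraph := by
  refine ⟨f.noNodeNode_of_surjective hf hG.1, fun x hx => ⟨fun e₁' e₂' h₁ h₂ ht₁ ht₂ => ?_,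
    fun e₁' e₂' h₁ h₂ hs₁ hs₂ => ?_⟩⟩ <;>
    obtain ⟨e₁, rfl⟩ := hf e₁' <;> obtain ⟨e₂, rfl⟩ := hf e₂' <;>
    rw [f.emap_mem_sigmaEdges] at h₁ h₂
  · rw [f.t_emap] at ht₁ ht₂
    have hw : G.ty (G.t e₂) = .wire := by rw [← f.ty_vmap, ht₂, hx]
    exact congrArg f.emap ((hG.2 _ hw).1 e₁ e₂ h₁ h₂ (hinj _ _ hw (ht₁.trans ht₂.symm)) rfl)
  · rw [f.s_emap] at hs₁ hs₂
    have hw : G.ty (G.s e₂) = .wire := by rw [← f.ty_vmap, hs₂, hx]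
    exact congrArg f.emap ((hG.2 _ hw).2 e₁ e₂ h₁ h₂ (hinj _ _ hw (hs₁.trans hs₂.symm)) rfl)

theorem mem_bsucc {a w : V} (h : w ∈ G.bsucc a) : f.vmap w ∈ H.bsucc (f.vmap a) := by
  obtain ⟨e, rfl, rfl⟩ := h
  exact ⟨f.emap e, f.s_emap e, f.t_emap e⟩

theorem mem_bsucc_iff_of_surjective (hf : Function.Surjective f.emap) {x y : W} :
    y ∈ H.bsucc x ↔ ∃ a w, f.vmap a = x ∧ f.vmap w = y ∧ w ∈ G.bsucc a := by
  constructor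
  · rintro ⟨e', rfl, rfl⟩
    obtain ⟨e, rfl⟩ := hf e'
    exact ⟨G.s e, G.t e, (f.s_emap e).symm, (f.t_emap e).symm, e, rfl, rfl⟩
  · rintro ⟨a, w, rfl, rfl, h⟩
    exact f.mem_bsucc h

theorem isOpenSet_preimage {S : Set W} (h : H.IsOpenSet S) : G.IsOpenSet (f.vmap ⁻¹' S) := by
  refine ⟨fun e hs hwire hns => ?_, fun e ht hwire => ?_⟩
  · simpa only [Set.mem_preimage, f.s_emap, f.t_emap, f.ty_vmap] using
      h.1 (f.emap e) (by rwa [f.s_emap]) (by rwa [f.t_emap, f.ty_vmap])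
        (by rwa [f.s_emap, f.ty_vmap])
  · simpa only [Set.mem_preimage, f.s_emap] using
      h.2 (f.emap e) (by rwa [f.t_emap]) (by rwa [f.s_emap, f.ty_vmap])

theorem isOpenSet_of_preimage (hf : Function.Surjective f.emap) {S : Set W}
    (h : G.IsOpenSet (f.vmap ⁻¹' S)) : H.IsOpenSet S := by
  refine ⟨fun e' hs hwire hns => ?_, fun e' ht hwire => ?_⟩ <;> obtain ⟨e, rfl⟩ := hf e'
  · rw [f.s_emap] at hs
    rw [f.t_emap, f.ty_vmap] at hwire
    rw [f.s_emap, f.ty_vmap] at hns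
    rw [f.t_emap]
    exact h.1 e hs hwire hns
  · rw [f.t_emap] at ht
    rw [f.s_emap, f.ty_vmap] at hwire
    rw [f.s_emap]
    exact h.2 e ht hwire

end Hom

section Pattern

variable {G : TGraph V E}

theorem isPattern_of (h3 : G.IsG3) (hstr : G.SigmaIsStringGraph)
    (hsimple : ∀ e₁ e₂, e₁ ∈ G.betaEdges → e₂ ∈ G.betaEdges →
      G.s e₁ = G.s e₂ → G.t e₁ = G.t e₂ → e₁ = e₂)
    (hrefl : ∀ a, G.ty a = .bang → a ∈ G.bsucc a)
    (hanti : ∀ a c, G.ty a = .bang → G.ty c = .bang →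
      c ∈ G.bsucc a → a ∈ G.bsucc c → a = c)
    (hopen : ∀ a, G.ty a = .bang → G.IsOpenSet (G.bsucc a))
    (hnest : ∀ a c, G.ty a = .bang → G.ty c = .bang → c ∈ G.bsucc a → G.bsucc c ⊆ G.bsucc a) :
    G.IsPattern :=
  ⟨h3, hstr, ⟨hsimple, hrefl, hanti, fun a c _ ha hc _ hac hcd => hnest a c ha hc hac hcd⟩,
    fun a ha => (hopen a ha).isOpen_fullSub, hnest⟩

namespace IsPattern

theorem beta_simple (hG : G.IsPattern) {e₁ e₂ : E} (h₁ : e₁ ∈ G.betaEdges)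
    (h₂ : e₂ ∈ G.betaEdges) (hs : G.s e₁ = G.s e₂) (ht : G.t e₁ = G.t e₂) : e₁ = e₂ :=
  hG.2.2.1.1 e₁ e₂ h₁ h₂ hs ht

theorem mem_bsucc_self (hG : G.IsPattern) {a : V} (ha : G.ty a = .bang) : a ∈ G.bsucc a :=
  hG.2.2.1.2.1 a ha

theorem antisymm (hG : G.IsPattern) {a c : V} (ha : G.ty a = .bang) (hc : G.ty c = .bang)
    (hac : c ∈ G.bsucc a) (hca : a ∈ G.bsucc c) : a = c :=
  hG.2.2.1.2.2.1 a c ha hc hac hca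

theorem bsucc_subset (hG : G.IsPattern) {a c : V} (ha : G.ty a = .bang) (hc : G.ty c = .bang)
    (hac : c ∈ G.bsucc a) : G.bsucc c ⊆ G.bsucc a :=
  hG.2.2.2.2 a c ha hc hac

theorem isOpenSet_bsucc (hG : G.IsPattern) {a : V} (ha : G.ty a = .bang) :
    G.IsOpenSet (G.bsucc a) :=
  isOpenSet_of_isOpen_fullSub hG.1 hG.2.1 (hG.2.2.2.1 a ha)

end IsPattern

end Pattern

section Restrict

variable {G : TGraph V E}

def restrictHom (G : TGraph V E) (S : Set V) : Hom (G.restrict S) G :=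
  ⟨Subtype.val, Subtype.val, fun _ => rfl, fun _ => rfl, fun _ => rfl⟩

theorem bsucc_restrict (S : Set V) (a : {v // v ∈ S}) :
    (G.restrict S).bsucc a = Subtype.val ⁻¹' G.bsucc a.1 := by
  ext ⟨w, hw⟩
  constructor
  · rintro ⟨e, rfl, he⟩
    exact ⟨e.1, rfl, congrArg Subtype.val he⟩
  · rintro ⟨e, hs, ht⟩
    exact ⟨⟨e, hs ▸ a.2, ht ▸ hw⟩, Subtype.ext hs, Subtype.ext ht⟩

theorem IsPattern.restrict (hG : G.IsPattern) (S : Set V) : (G.restrict S).IsPattern := by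
  have hsucc {a c : {v // v ∈ S}} : c ∈ (G.restrict S).bsucc a ↔ c.1 ∈ G.bsucc a.1 := by
    rw [bsucc_restrict]; rfl
  refine isPattern_of ((G.restrictHom S).isG3 hG.1)
    ((G.restrictHom S).sigmaIsStringGraph_of_injective Subtype.val_injective hG.2.1)
    (fun e₁ e₂ h₁ h₂ hs ht => Subtype.val_injective
      (hG.beta_simple h₁ h₂ (congrArg Subtype.val hs) (congrArg Subtype.val ht)))
    (fun a ha => hsucc.2 (hG.mem_bsucc_self ha))
    (fun a c ha hc hac hca => Subtype.val_injective
      (hG.antisymm ha hc (hsucc.1 hac) (hsucc.1 hca)))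
    (fun a ha => ?_)
    (fun a c ha hc hac w hw => hsucc.2 (hG.bsucc_subset ha hc (hsucc.1 hac) (hsucc.1 hw)))
  rw [bsucc_restrict]
  exact (G.restrictHom S).isOpenSet_preimage (hG.isOpenSet_bsucc ha)

end Restrict

section Copy

variable {G : TGraph V E} {b : V}

theorem embed_eq_inl_iff {v : V} : G.embed b v = Sum.inl v ↔ v ∉ G.bsucc b := by
  by_cases h : v ∈ G.bsucc b <;> simp [embed, h]

theorem elim_embed (v : V) : Sum.elim id Subtype.val (G.embed b v) = v := by
  unfold embed; split <;> rfl

theorem copyGraph_ty_embed (v : V) : (G.copyGraph b).ty (G.embed b v) = G.ty v := by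
  unfold embed; split <;> rfl

noncomputable def copyFold (G : TGraph V E) (b : V) : Hom (G.copyGraph b) G where
  vmap := Sum.elim id Subtype.val
  emap := Sum.elim id Subtype.val
  s_emap := by
    rintro (e | f) <;> simp only [copyGraph, Sum.elim_inl, Sum.elim_inr, id_eq, elim_embed]
  t_emap := by
    rintro (e | f) <;> simp only [copyGraph, Sum.elim_inl, Sum.elim_inr, id_eq, elim_embed]
  ty_vmap := by rintro (v | u) <;> rfl

def copyFst (G : TGraph V E) (b : V) : Hom G (G.copyGraph b) :=
  ⟨Sum.inl, Sum.inl, fun _ => rfl, fun _ => rfl, fun _ => rfl⟩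

open Classical in
noncomputable def copySnd (G : TGraph V E) (b : V) : Hom G (G.copyGraph b) where
  vmap := G.embed b
  emap e := if h : G.s e ∈ G.bsucc b ∨ G.t e ∈ G.bsucc b then Sum.inr ⟨e, h⟩ else Sum.inl e
  s_emap e := by
    split_ifs with h
    · rfl
    · exact (embed_eq_inl_iff.2 fun hs => h (Or.inl hs)).symm
  t_emap e := by
    split_ifs with h
    · rfl
    · exact (embed_eq_inl_iff.2 fun ht => h (Or.inr ht)).symm
  ty_vmap := copyGraph_ty_embed

/-- `x` and `y` lie in a common copy of `G` inside `COPY_b(G)`: the first copy is the range of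
`Sum.inl`, the second that of `G.embed b`. -/
def SameCopy (G : TGraph V E) (b : V) (x y : V ⊕ {w // w ∈ G.bsucc b}) : Prop :=
  (x ∈ Set.range Sum.inl ∧ y ∈ Set.range Sum.inl) ∨
    (x ∈ Set.range (G.embed b) ∧ y ∈ Set.range (G.embed b))

theorem mem_range_inl_and_embed_iff (x : V ⊕ {w // w ∈ G.bsucc b}) :
    (x ∈ Set.range Sum.inl ∧ x ∈ Set.range (G.embed b)) ↔ (G.copyFold b).vmap x ∉ G.bsucc b := by
  rcases x with v | u
  · refine ⟨fun ⟨_, w, hw⟩ => ?_, fun hv => ⟨⟨v, rfl⟩, v, embed_eq_inl_iff.2 hv⟩⟩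
    obtain rfl : w = v := (elim_embed w).symm.trans (congrArg (Sum.elim id Subtype.val) hw)
    exact embed_eq_inl_iff.1 hw
  · exact iff_of_false (fun ⟨⟨_, h⟩, _⟩ => Sum.inl_ne_inr h) (not_not.2 u.2)

theorem SameCopy.refl (x : V ⊕ {w // w ∈ G.bsucc b}) : G.SameCopy b x x := by
  rcases x with v | u
  · exact Or.inl ⟨⟨v, rfl⟩, ⟨v, rfl⟩⟩
  · exact Or.inr ⟨⟨u, G.embed_of_mem u.2⟩, ⟨u, G.embed_of_mem u.2⟩⟩

theorem SameCopy.symm {x y : V ⊕ {w // w ∈ G.bsucc b}} (h : G.SameCopy b x y) :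
    G.SameCopy b y x :=
  h.imp And.symm And.symm

/-- One can only pass from one copy to the other through the shared part `G ∖ B(b)`. -/
theorem SameCopy.trans {x y z : V ⊕ {w // w ∈ G.bsucc b}} (hxy : G.SameCopy b x y)
    (hyz : G.SameCopy b y z)
    (h : (G.copyFold b).vmap x ∈ G.bsucc b → (G.copyFold b).vmap y ∈ G.bsucc b) :
    G.SameCopy b x z := by
  have hx (hy : y ∈ Set.range Sum.inl ∧ y ∈ Set.range (G.embed b)) :
      x ∈ Set.range Sum.inl ∧ x ∈ Set.range (G.embed b) :=
    (mem_range_inl_and_embed_iff x).2 (mt h ((mem_range_inl_and_embed_iff y).1 hy))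
  rcases hxy with ⟨hx₁, hy₁⟩ | ⟨hx₂, hy₂⟩ <;> rcases hyz with ⟨hy₁', hz₁⟩ | ⟨hy₂', hz₂⟩
  · exact Or.inl ⟨hx₁, hz₁⟩
  · exact Or.inr ⟨(hx ⟨hy₁, hy₂'⟩).2, hz₂⟩
  · exact Or.inl ⟨(hx ⟨hy₁', hy₂⟩).1, hz₁⟩
  · exact Or.inr ⟨hx₂, hz₂⟩

theorem sameCopy_s_t (e : E ⊕ {e : E // G.s e ∈ G.bsucc b ∨ G.t e ∈ G.bsucc b}) :
    G.SameCopy b ((G.copyGraph b).s e) ((G.copyGraph b).t e) := by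
  rcases e with e | f
  · exact Or.inl ⟨⟨_, rfl⟩, ⟨_, rfl⟩⟩
  · exact Or.inr ⟨⟨_, rfl⟩, ⟨_, rfl⟩⟩

theorem eq_of_copyFold_eq {x y : V ⊕ {w // w ∈ G.bsucc b}}
    (h : (G.copyFold b).vmap x = (G.copyFold b).vmap y) (hxy : G.SameCopy b x y) : x = y := by
  rcases hxy with ⟨⟨v, rfl⟩, ⟨w, rfl⟩⟩ | ⟨⟨v, rfl⟩, ⟨w, rfl⟩⟩
  · exact congrArg Sum.inl h
  · have h' : v = w := by simpa only [copyFold, elim_embed] using h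
    rw [h']

theorem mem_bsucc_copyGraph_iff {x y : V ⊕ {w // w ∈ G.bsucc b}} :
    y ∈ (G.copyGraph b).bsucc x ↔
      (G.copyFold b).vmap y ∈ G.bsucc ((G.copyFold b).vmap x) ∧ G.SameCopy b x y := by
  constructor
  · rintro ⟨e, rfl, rfl⟩
    exact ⟨(G.copyFold b).mem_bsucc ⟨e, rfl, rfl⟩, sameCopy_s_t e⟩
  · rintro ⟨h, ⟨⟨v, rfl⟩, ⟨w, rfl⟩⟩ | ⟨⟨v, rfl⟩, ⟨w, rfl⟩⟩⟩
    · exact (G.copyFst b).mem_bsucc h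
    · simp only [copyFold, elim_embed] at h
      exact (G.copySnd b).mem_bsucc h

theorem copyGraph_edge_ext {e₁ e₂ : E ⊕ {e : E // G.s e ∈ G.bsucc b ∨ G.t e ∈ G.bsucc b}}
    (h : (G.copyFold b).emap e₁ = (G.copyFold b).emap e₂)
    (hs : (G.copyGraph b).s e₁ = (G.copyGraph b).s e₂)
    (ht : (G.copyGraph b).t e₁ = (G.copyGraph b).t e₂) : e₁ = e₂ := by
  rcases e₁ with e₁ | f₁ <;> rcases e₂ with e₂ | f₂
  · exact congrArg Sum.inl h
  · obtain rfl : e₁ = f₂.1 := h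
    exact (f₂.2.elim (embed_eq_inl_iff.1 hs.symm) (embed_eq_inl_iff.1 ht.symm)).elim
  · obtain rfl : f₁.1 = e₂ := h
    exact (f₁.2.elim (embed_eq_inl_iff.1 hs) (embed_eq_inl_iff.1 ht)).elim
  · exact congrArg Sum.inr (Subtype.ext h)

theorem IsPattern.sigmaIsStringGraph_copyGraph (hG : G.IsPattern) (hb : G.ty b = .bang) :
    (G.copyGraph b).SigmaIsStringGraph := by
  set p := G.copyFold b
  have hB := hG.isOpenSet_bsucc hb
  refine ⟨p.noNodeNode hG.2.1.1, fun x hx => ?_⟩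
  have hx' : G.ty (p.vmap x) = .wire := by rw [p.ty_vmap, hx]
  refine ⟨fun e₁ e₂ h₁ h₂ ht₁ ht₂ => ?_, fun e₁ e₂ h₁ h₂ hs₁ hs₂ => ?_⟩ <;>
    rw [← p.emap_mem_sigmaEdges] at h₁ h₂
  · have he : p.emap e₁ = p.emap e₂ := (hG.2.1.2 _ hx').1 _ _ h₁ h₂
      (by rw [p.t_emap, ht₁]) (by rw [p.t_emap, ht₂])
    refine copyGraph_edge_ext he (eq_of_copyFold_eq ?_ ?_) (ht₁.trans ht₂.symm)
    · rw [← p.s_emap, ← p.s_emap, he]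
    · -- a Σ-edge leaving `B(b)` cannot end in a wire, so both sources lie in the copy of `x`
      refine (sameCopy_s_t e₁).trans (by rw [ht₁, ← ht₂]; exact (sameCopy_s_t e₂).symm)
        fun hs => ?_
      rw [← p.s_emap] at hs
      rw [← p.t_emap]
      exact hB.1 _ hs (by rwa [p.t_emap, ht₁]) h₁.1
  · have he : p.emap e₁ = p.emap e₂ := (hG.2.1.2 _ hx').2 _ _ h₁ h₂
      (by rw [p.s_emap, hs₁]) (by rw [p.s_emap, hs₂])
    refine copyGraph_edge_ext he (hs₁.trans hs₂.symm) (eq_of_copyFold_eq ?_ ?_)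
    · rw [← p.t_emap, ← p.t_emap, he]
    · -- no edge enters `B(b)` from a wire, so both targets lie in the copy of `x`
      refine (sameCopy_s_t e₁).symm.trans (by rw [hs₁, ← hs₂]; exact sameCopy_s_t e₂)
        fun ht => ?_
      rw [← p.t_emap] at ht
      rw [← p.s_emap]
      exact hB.2 _ ht (by rwa [p.s_emap, hs₁])

theorem IsPattern.isOpenSet_bsucc_copyGraph (hG : G.IsPattern) (hb : G.ty b = .bang)
    {x : V ⊕ {w // w ∈ G.bsucc b}} (hx : (G.copyGraph b).ty x = .bang) :
    (G.copyGraph b).IsOpenSet ((G.copyGraph b).bsucc x) := by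
  set p := G.copyFold b
  have hx' : G.ty (p.vmap x) = .bang := by rw [p.ty_vmap, hx]
  have hB {y} (hy : p.vmap y ∈ G.bsucc (p.vmap x)) (hxB : p.vmap x ∈ G.bsucc b) :
      p.vmap y ∈ G.bsucc b :=
    hG.bsucc_subset hb hx' hxB hy
  -- inside the preimage of the box of `p.vmap x`, edges never change copy
  refine (p.isOpenSet_preimage (hG.isOpenSet_bsucc hx')).of_subset
    (fun y hy => (mem_bsucc_copyGraph_iff.1 hy).1) fun e hs ht => ?_
  rw [Set.mem_preimage] at hs ht
  rw [mem_bsucc_copyGraph_iff, mem_bsucc_copyGraph_iff]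
  exact ⟨fun h => ⟨ht, h.2.trans (sameCopy_s_t e) (hB hs)⟩,
    fun h => ⟨hs, h.2.trans (sameCopy_s_t e).symm (hB ht)⟩⟩

theorem IsPattern.copyGraph (hG : G.IsPattern) (hb : G.ty b = .bang) :
    (G.copyGraph b).IsPattern := by
  set p := G.copyFold b
  have hty {x} (hx : (G.copyGraph b).ty x = .bang) : G.ty (p.vmap x) = .bang := by
    rw [p.ty_vmap, hx]
  refine isPattern_of (p.isG3 hG.1) (hG.sigmaIsStringGraph_copyGraph hb)
    (fun e₁ e₂ h₁ h₂ hs ht => ?_)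
    (fun x hx => mem_bsucc_copyGraph_iff.2 ⟨hG.mem_bsucc_self (hty hx), .refl x⟩)
    (fun x y hx hy hxy hyx => ?_) (fun x hx => hG.isOpenSet_bsucc_copyGraph hb hx)
    (fun x y hx hy hxy z hz => ?_)
  · rw [← p.emap_mem_betaEdges] at h₁ h₂
    refine copyGraph_edge_ext (hG.beta_simple h₁ h₂ ?_ ?_) hs ht
    · rw [p.s_emap, p.s_emap, hs]
    · rw [p.t_emap, p.t_emap, ht]
  · rw [mem_bsucc_copyGraph_iff] at hxy hyx
    exact eq_of_copyFold_eq (hG.antisymm (hty hx) (hty hy) hxy.1 hyx.1) hxy.2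
  · rw [mem_bsucc_copyGraph_iff] at hxy hz ⊢
    exact ⟨hG.bsucc_subset (hty hx) (hty hy) hxy.1 hz.1,
      hxy.2.trans hz.2 fun hxB => hG.bsucc_subset hb (hty hx) hxB hxy.1⟩

end Copy

section Merge

variable {G : TGraph V E} {b b' : V}

theorem mergeVRel_iff {u w : V} :
    mergeVRel b b' u w ↔ u = w ∨ (u = b ∨ u = b') ∧ (w = b ∨ w = b') := by
  unfold mergeVRel
  constructor
  · rintro (h | ⟨rfl, rfl⟩ | ⟨rfl, rfl⟩) <;> simp [*]
  · rintro (h | ⟨rfl | rfl, rfl | rfl⟩) <;> simp [*]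

theorem mergeVRel_equivalence : Equivalence (mergeVRel (V := V) b b') := by
  refine ⟨fun u => mergeVRel_iff.2 (Or.inl rfl), fun h => ?_, fun h₁ h₂ => ?_⟩
  · rcases mergeVRel_iff.1 h with rfl | ⟨hu, hw⟩
    exacts [mergeVRel_iff.2 (Or.inl rfl), mergeVRel_iff.2 (Or.inr ⟨hw, hu⟩)]
  · rcases mergeVRel_iff.1 h₁ with rfl | ⟨hu, -⟩
    · exact h₂
    rcases mergeVRel_iff.1 h₂ with rfl | ⟨-, hw⟩
    · exact h₁
    · exact mergeVRel_iff.2 (Or.inr ⟨hu, hw⟩)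

theorem mk_eq_mk_iff {u w : V} :
    Quot.mk (mergeVRel b b') u = Quot.mk _ w ↔ mergeVRel b b' u w :=
  Quot.eq.trans mergeVRel_equivalence.eqvGen_iff

theorem eq_of_mergeVRel {u w : V} (h : mergeVRel b b' u w) (hwb : w ≠ b) (hwb' : w ≠ b') :
    u = w :=
  (mergeVRel_iff.1 h).resolve_right fun ⟨_, hw⟩ => hw.elim hwb hwb'

theorem ty_eq_of_mergeVRel (hb : G.ty b = .bang) (hb' : G.ty b' = .bang) {u w : V}
    (h : mergeVRel b b' u w) : G.ty u = G.ty w := by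
  rcases h with rfl | ⟨rfl, rfl⟩ | ⟨rfl, rfl⟩
  exacts [rfl, hb.trans hb'.symm, hb'.trans hb.symm]

theorem mem_upEdges_of_t_eq {c : V} {e : E} (hc : c ∈ G.bsucc c) (he : G.t e = c) :
    e ∈ G.upEdges c :=
  ⟨⟨e, rfl, he⟩, by rw [he]; exact hc⟩

def mergeHom (G : TGraph V E) (b b' : V) (h : G.ty b' = G.ty b) : Hom G (G.mergeGraph b b') where
  vmap := Quot.mk _
  emap := Quot.mk _
  s_emap _ := rfl
  t_emap _ := rfl
  ty_vmap v := by
    rw [mergeGraph_ty_mk]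
    split_ifs with hv
    · rw [hv, h]
    · rfl

def mergeSucc (G : TGraph V E) (b b' u : V) : Set V :=
  ⋃ u' ∈ {u' | mergeVRel b b' u' u}, G.bsucc u'

theorem mem_mergeSucc {u w : V} :
    w ∈ G.mergeSucc b b' u ↔ ∃ u', mergeVRel b b' u' u ∧ w ∈ G.bsucc u' := by
  simp only [mergeSucc, Set.mem_iUnion₂, Set.mem_ofPred_eq, exists_prop]

theorem mergeSucc_of_ne {u : V} (hub : u ≠ b) (hub' : u ≠ b') : G.mergeSucc b b' u = G.bsucc u := by
  ext w
  rw [mem_mergeSucc]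
  constructor
  · rintro ⟨u', h, hw⟩
    rwa [eq_of_mergeVRel h hub hub'] at hw
  · exact fun hw => ⟨u, mergeVRel_iff.2 (Or.inl rfl), hw⟩

theorem mem_bsucc_of_mergeVRel (hpred : G.bpred b \ {b} = G.bpred b' \ {b'}) {u w w' : V}
    (hub : u ≠ b) (hub' : u ≠ b') (hww' : mergeVRel b b' w w') (hw : w ∈ G.bsucc u) :
    w' ∈ G.bsucc u := by
  have hiff : b ∈ G.bsucc u ↔ b' ∈ G.bsucc u := by
    have := Set.ext_iff.1 hpred u
    simp only [Set.mem_sdiff, Set.mem_singleton_iff, hub, hub', not_false_eq_true, and_true] at this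
    exact this
  rcases hww' with rfl | ⟨rfl, rfl⟩ | ⟨rfl, rfl⟩
  exacts [hw, hiff.1 hw, hiff.2 hw]

theorem mem_mergeSucc_of_mergeVRel (hG : G.IsPattern) (hb : G.ty b = .bang) (hb' : G.ty b' = .bang)
    (hpred : G.bpred b \ {b} = G.bpred b' \ {b'}) {u w w' : V} (hww' : mergeVRel b b' w w')
    (hw : w ∈ G.mergeSucc b b' u) : w' ∈ G.mergeSucc b b' u := by
  obtain ⟨u', hu'u, hwu'⟩ := mem_mergeSucc.1 hw
  rw [mem_mergeSucc]
  by_cases hu' : u' = b ∨ u' = b'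
  · rcases mergeVRel_iff.1 hww' with rfl | ⟨-, hw'⟩
    · exact ⟨u', hu'u, hwu'⟩
    have hw'bang : G.ty w' = .bang := by rcases hw' with rfl | rfl <;> assumption
    refine ⟨w', mergeVRel_iff.2 (Or.inr ⟨hw', ?_⟩), hG.mem_bsucc_self hw'bang⟩
    rcases mergeVRel_iff.1 hu'u with rfl | ⟨-, hu⟩
    exacts [hu', hu]
  · obtain ⟨hu'b, hu'b'⟩ := not_or.1 hu'
    exact ⟨u', hu'u, mem_bsucc_of_mergeVRel hpred hu'b hu'b' hww' hwu'⟩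

theorem mergeSucc_nest (hG : G.IsPattern) (hb : G.ty b = .bang) (hb' : G.ty b' = .bang)
    (hpred : G.bpred b \ {b} = G.bpred b' \ {b'}) {x y z : V} (hx : G.ty x = .bang)
    (hy : G.ty y = .bang) (hxy : y ∈ G.mergeSucc b b' x) (hyz : z ∈ G.mergeSucc b b' y) :
    z ∈ G.mergeSucc b b' x := by
  obtain ⟨y', hy'y, hz⟩ := mem_mergeSucc.1 hyz
  obtain ⟨x', hx'x, hy'⟩ := mem_mergeSucc.1
    (mem_mergeSucc_of_mergeVRel hG hb hb' hpred (mergeVRel_equivalence.symm hy'y) hxy)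
  exact mem_mergeSucc.2 ⟨x', hx'x, hG.bsucc_subset ((ty_eq_of_mergeVRel hb hb' hx'x).trans hx)
    ((ty_eq_of_mergeVRel hb hb' hy'y).trans hy) hy' hz⟩

theorem eq_of_mem_mergeSucc (hG : G.IsPattern) (hb : G.ty b = .bang) (hb' : G.ty b' = .bang)
    (hpred : G.bpred b \ {b} = G.bpred b' \ {b'}) {x y : V} (hx : G.ty x = .bang)
    (hy : G.ty y = .bang) (hxb : x ≠ b) (hxb' : x ≠ b') (hxy : y ∈ G.mergeSucc b b' x)
    (hyx : x ∈ G.mergeSucc b b' y) : x = y := by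
  obtain ⟨y', hy'y, hxy'⟩ := mem_mergeSucc.1 hyx
  have hy'x : y' ∈ G.bsucc x := by
    rw [← mergeSucc_of_ne hxb hxb']
    exact mem_mergeSucc_of_mergeVRel hG hb hb' hpred (mergeVRel_equivalence.symm hy'y) hxy
  have hxy'' : x = y' := hG.antisymm hx ((ty_eq_of_mergeVRel hb hb' hy'y).trans hy) hy'x hxy'
  rw [← hxy''] at hy'y
  exact (eq_of_mergeVRel (mergeVRel_equivalence.symm hy'y) hxb hxb').symm

theorem mergeVRel_of_mem_mergeSucc (hG : G.IsPattern) (hb : G.ty b = .bang)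
    (hb' : G.ty b' = .bang) (hpred : G.bpred b \ {b} = G.bpred b' \ {b'}) {x y : V}
    (hx : G.ty x = .bang) (hy : G.ty y = .bang) (hxy : y ∈ G.mergeSucc b b' x)
    (hyx : x ∈ G.mergeSucc b b' y) : mergeVRel b b' x y := by
  by_cases hxm : x = b ∨ x = b'
  · by_cases hym : y = b ∨ y = b'
    · exact mergeVRel_iff.2 (Or.inr ⟨hxm, hym⟩)
    · obtain ⟨hyb, hyb'⟩ := not_or.1 hym
      exact mergeVRel_iff.2
        (Or.inl (eq_of_mem_mergeSucc hG hb hb' hpred hy hx hyb hyb' hyx hxy).symm)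
  · obtain ⟨hxb, hxb'⟩ := not_or.1 hxm
    exact mergeVRel_iff.2 (Or.inl (eq_of_mem_mergeSucc hG hb hb' hpred hx hy hxb hxb' hxy hyx))

theorem mk_mem_bsucc_mergeGraph_iff (hG : G.IsPattern) (hb : G.ty b = .bang)
    (hb' : G.ty b' = .bang) (hpred : G.bpred b \ {b} = G.bpred b' \ {b'}) {u w : V} :
    Quot.mk _ w ∈ (G.mergeGraph b b').bsucc (Quot.mk _ u) ↔ w ∈ G.mergeSucc b b' u := by
  rw [(G.mergeHom b b' (hb'.trans hb.symm)).mem_bsucc_iff_of_surjective Quot.mk_surjective]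
  constructor
  · rintro ⟨u', w', hu', hw', h⟩
    exact mem_mergeSucc_of_mergeVRel hG hb hb' hpred (mk_eq_mk_iff.1 hw')
      (mem_mergeSucc.2 ⟨u', mk_eq_mk_iff.1 hu', h⟩)
  · intro h
    obtain ⟨u', hu', h⟩ := mem_mergeSucc.1 h
    exact ⟨u', w, mk_eq_mk_iff.2 hu', rfl, h⟩

theorem isOpenSet_mergeSucc (hG : G.IsPattern) (hb : G.ty b = .bang) (hb' : G.ty b' = .bang)
    {u : V} (hu : G.ty u = .bang) : G.IsOpenSet (G.mergeSucc b b' u) :=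
  isOpenSet_biUnion fun _ hu' => hG.isOpenSet_bsucc ((ty_eq_of_mergeVRel hb hb' hu').trans hu)

theorem IsPattern.mk_eq_mk_mergeERel (hG : G.IsPattern) (hb : G.ty b = .bang)
    (hb' : G.ty b' = .bang) (hdisj : G.bsucc b ∩ G.bsucc b' = ∅) {f₁ f₂ : E}
    (h₁ : f₁ ∈ G.betaEdges) (h₂ : f₂ ∈ G.betaEdges)
    (hs : Quot.mk (mergeVRel b b') (G.s f₁) = Quot.mk _ (G.s f₂))
    (ht : Quot.mk (mergeVRel b b') (G.t f₁) = Quot.mk _ (G.t f₂)) :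
    Quot.mk (G.mergeERel b b') f₁ = Quot.mk _ f₂ := by
  have hdisj' := Set.disjoint_left.1 (Set.disjoint_iff_inter_eq_empty.2 hdisj)
  rcases mk_eq_mk_iff.1 ht with ht' | ⟨ht₁, ht₂⟩ | ⟨ht₁, ht₂⟩
  · rcases mk_eq_mk_iff.1 hs with hs' | ⟨hs₁, hs₂⟩ | ⟨hs₁, hs₂⟩
    · exact congrArg _ (hG.beta_simple h₁ h₂ hs' ht')
    · exact (hdisj' ⟨f₁, hs₁, rfl⟩ ⟨f₂, hs₂, ht'.symm⟩).elim
    · exact (hdisj' ⟨f₂, hs₂, ht'.symm⟩ ⟨f₁, hs₁, rfl⟩).elim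
  · exact Quot.sound (Or.inr (Or.inl ⟨mem_upEdges_of_t_eq (hG.mem_bsucc_self hb) ht₁,
      mem_upEdges_of_t_eq (hG.mem_bsucc_self hb') ht₂, hs, ht⟩))
  · exact Quot.sound (Or.inr (Or.inr ⟨mem_upEdges_of_t_eq (hG.mem_bsucc_self hb') ht₁,
      mem_upEdges_of_t_eq (hG.mem_bsucc_self hb) ht₂, hs, ht⟩))

theorem IsPattern.mergeGraph (hG : G.IsPattern) (hb : G.ty b = .bang) (hb' : G.ty b' = .bang)
    (hpred : G.bpred b \ {b} = G.bpred b' \ {b'}) (hdisj : G.bsucc b ∩ G.bsucc b' = ∅) :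
    (G.mergeGraph b b').IsPattern := by
  set q := G.mergeHom b b' (hb'.trans hb.symm)
  have hq : Function.Surjective q.emap := Quot.mk_surjective
  have hsucc {u w : V} := mk_mem_bsucc_mergeGraph_iff hG hb hb' hpred (u := u) (w := w)
  have hty {u : V} (hu : (G.mergeGraph b b').ty (Quot.mk _ u) = .bang) : G.ty u = .bang :=
    (q.ty_vmap u).symm.trans hu
  refine isPattern_of (q.isG3_of_surjective hq hG.1)
    (q.sigmaIsStringGraph_of_surjective hq (fun v w hw h => ?_) hG.2.1) ?_ ?_ ?_ ?_ ?_
  · have hne {c : V} (hc : G.ty c = .bang) : w ≠ c := by rintro rfl; rw [hc] at hw; cases hw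
    exact eq_of_mergeVRel (mk_eq_mk_iff.1 h) (hne hb) (hne hb')
  · rintro ⟨f₁⟩ ⟨f₂⟩ h₁ h₂
    exact hG.mk_eq_mk_mergeERel hb hb' hdisj (q.emap_mem_betaEdges.1 h₁) (q.emap_mem_betaEdges.1 h₂)
  · rintro ⟨u⟩ hu
    exact hsucc.2 (mem_mergeSucc.2 ⟨u, mergeVRel_iff.2 (Or.inl rfl), hG.mem_bsucc_self (hty hu)⟩)
  · rintro ⟨x⟩ ⟨y⟩ hx hy hxy hyx
    exact Quot.sound (mergeVRel_of_mem_mergeSucc hG hb hb' hpred (hty hx) (hty hy)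
      (hsucc.1 hxy) (hsucc.1 hyx))
  · rintro ⟨u⟩ hu
    refine q.isOpenSet_of_preimage hq ?_
    rw [show q.vmap ⁻¹' (G.mergeGraph b b').bsucc (Quot.mk _ u) = G.mergeSucc b b' u from
      Set.ext fun _ => hsucc]
    exact isOpenSet_mergeSucc hG hb hb' (hty hu)
  · rintro ⟨x⟩ ⟨y⟩ hx hy hxy ⟨z⟩ hz
    exact hsucc.2 (mergeSucc_nest hG hb hb' hpred (hty hx) (hty hy) (hsucc.1 hxy) (hsucc.1 hz))

end Merge

end TGraph

/-- For a pattern graph `G` and a `!`-vertex `b` of `G`,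
`COPY_b(G)`, `DROP_b(G)` and `KILL_b(G)` are pattern graphs; and if moreover
`b'` is a `!`-vertex with `B↑(b)∖b = B↑(b')∖b'` and `B(b) ∩ B(b') = ∅`, then
`MERGE_{b,b'}(G)` is a pattern graph. -/
theorem statement_7 {V E : Type} {G : TGraph V E} (hG : G.IsPattern)
    (b : V) (hb : G.ty b = .bang) :
    (G.copyGraph b).IsPattern ∧
    (G.dropGraph b).IsPattern ∧
    (G.killGraph b).IsPattern ∧
    (∀ b' : V, G.ty b' = .bang →
      G.bpred b \ {b} = G.bpred b' \ {b'} →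
      G.bsucc b ∩ G.bsucc b' = ∅ →
      (G.mergeGraph b b').IsPattern) :=
  ⟨hG.copyGraph hb, hG.restrict _, hG.restrict _,
    fun _ hb' hpred hdisj => hG.mergeGraph hb hb' hpred hdisj⟩
end

section
/- Let G be a pattern graph and b a !-vertex of G, and consider the pushout square defining COPY_b(G), with inclusions i₁, i₂ : G∖B(b) → G and pushout maps p₁, p₂ : G → COPY_b(G). Then all four maps i₁, i₂, p₁, p₂ take inputs to inputs and outputs to outputs. -/
theorem ty_embed {V E : Type} (G : TGraph V E) (b w : V) :
    (G.copyGraph b).ty (G.embed b w) = G.ty w := by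
  by_cases h : w ∈ G.bsucc b
  · rw [G.embed_of_mem h]; rfl
  · rw [G.embed_of_not_mem h]; rfl

/-- In the pushout square defining `COPY_b(G)`, with the
inclusions `G∖B(b) → G` and the pushout maps `p₁ = Sum.inl`, `p₂ = embed`
from `G` to `COPY_b(G)`, all maps take inputs to inputs and outputs to
outputs. -/
theorem statement_8 {V E : Type} {G : TGraph V E} (hG : G.IsPattern)
    (b : V) (hb : G.ty b = .bang) :
    (∀ v, (G.killGraph b).IsInput v → G.IsInput v.1) ∧
    (∀ v, (G.killGraph b).IsOutput v → G.IsOutput v.1) ∧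
    (∀ v, G.IsInput v → (G.copyGraph b).IsInput (Sum.inl v)) ∧
    (∀ v, G.IsOutput v → (G.copyGraph b).IsOutput (Sum.inl v)) ∧
    (∀ v, G.IsInput v → (G.copyGraph b).IsInput (G.embed b v)) ∧
    (∀ v, G.IsOutput v → (G.copyGraph b).IsOutput (G.embed b v)) := by
  obtain ⟨hG3, hSig, hBeta, hOpen, hNest⟩ := hG
  have hO := hOpen b hb
  have hcopyin : ∀ v, G.IsInput v → (G.copyGraph b).IsInput (Sum.inl v) := by
    rintro v ⟨hw, hin⟩
    refine ⟨hw, ?_⟩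
    rintro (e | e) ht
    · exact hin e (Sum.inl.inj ht)
    · show (G.copyGraph b).ty (G.embed b (G.s e.1)) = .bang
      have htE : G.embed b (G.t e.1) = Sum.inl v := ht
      by_cases hm : G.t e.1 ∈ G.bsucc b
      · rw [G.embed_of_mem hm] at htE; exact absurd htE (by simp)
      · rw [G.embed_of_not_mem hm] at htE
        have := hin e.1 (Sum.inl.inj htE)
        rw [ty_embed]; exact this
  have hcopyout : ∀ v, G.IsOutput v → (G.copyGraph b).IsOutput (Sum.inl v) := by
    rintro v ⟨hw, hout⟩
    refine ⟨hw, ?_⟩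
    rintro (e | e) hs
    · exact hout e (Sum.inl.inj hs)
    · have hsE : G.embed b (G.s e.1) = Sum.inl v := hs
      by_cases hm : G.s e.1 ∈ G.bsucc b
      · rw [G.embed_of_mem hm] at hsE; exact absurd hsE (by simp)
      · rw [G.embed_of_not_mem hm] at hsE
        exact hout e.1 (Sum.inl.inj hsE)
  refine ⟨?_, ?_, hcopyin, hcopyout, ?_, ?_⟩
  · rintro ⟨v, hv⟩ ⟨hw, hin⟩
    have : (TGraph.Sub.top G).IsInput v := by
      apply hO.1
      refine ⟨⟨trivial, hv⟩, hw, ?_⟩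
      rintro e ⟨-, hs, ht⟩ hte
      exact hin ⟨e, hs, ht⟩ (Subtype.ext hte)
    exact ⟨this.2.1, fun e hte => this.2.2 e trivial hte⟩
  · rintro ⟨v, hv⟩ ⟨hw, hout⟩
    have : (TGraph.Sub.top G).IsOutput v := by
      apply hO.2
      refine ⟨⟨trivial, hv⟩, hw, ?_⟩
      rintro e ⟨-, hs, ht⟩ hse
      exact hout ⟨e, hs, ht⟩ (Subtype.ext hse)
    exact ⟨this.2.1, fun e => this.2.2 e trivial⟩
  · intro v hv
    by_cases hm : v ∈ G.bsucc b
    · rw [G.embed_of_mem hm]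
      obtain ⟨hw, hin⟩ := hv
      refine ⟨hw, ?_⟩
      rintro (e | e) ht
      · exact absurd ht (by simp [TGraph.copyGraph])
      · have htE : G.embed b (G.t e.1) = Sum.inr ⟨v, hm⟩ := ht
        by_cases hm2 : G.t e.1 ∈ G.bsucc b
        · rw [G.embed_of_mem hm2] at htE
          have htv : G.t e.1 = v := congrArg Subtype.val (Sum.inr.inj htE)
          have := hin e.1 htv
          show (G.copyGraph b).ty (G.embed b (G.s e.1)) = .bang
          rw [ty_embed]; exact this
        · rw [G.embed_of_not_mem hm2] at htE; exact absurd htE (by simp)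
    · rw [G.embed_of_not_mem hm]; exact hcopyin v hv
  · intro v hv
    by_cases hm : v ∈ G.bsucc b
    · rw [G.embed_of_mem hm]
      obtain ⟨hw, hout⟩ := hv
      refine ⟨hw, ?_⟩
      rintro (e | e) hs
      · exact absurd hs (by simp [TGraph.copyGraph])
      · have hsE : G.embed b (G.s e.1) = Sum.inr ⟨v, hm⟩ := hs
        by_cases hm2 : G.s e.1 ∈ G.bsucc b
        · rw [G.embed_of_mem hm2] at hsE
          exact hout e.1 (congrArg Subtype.val (Sum.inr.inj hsE))
        · rw [G.embed_of_not_mem hm2] at hsE; exact absurd hsE (by simp)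
    · rw [G.embed_of_not_mem hm]; exact hcopyout v hv
end

section
/- Let G be a pattern graph and b a !-vertex of G, and consider KILL_b(G) = G∖B(b) as a subgraph of G with inclusion map ι. Then for every wire-vertex v of KILL_b(G), v is an input of KILL_b(G) if and only if ι(v) is an input of G, and v is an output of KILL_b(G) if and only if ι(v) is an output of G. -/
/-- Considering `KILL_b(G) = G∖B(b)` as a subgraph of `G` with
inclusion `ι = Subtype.val`, a wire-vertex `v` of `KILL_b(G)` is an input
(resp. output) of `KILL_b(G)` iff `ι(v)` is an input (resp. output) of `G`. -/
theorem statement_10 {V E : Type} {G : TGraph V E} (hG : G.IsPattern)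
    (b : V) (hb : G.ty b = .bang)
    (v : {w : V // w ∈ {u : V | u ∉ G.bsucc b}}) (hw : G.ty v.1 = .wire) :
    ((G.killGraph b).IsInput v ↔ G.IsInput v.1) ∧
    ((G.killGraph b).IsOutput v ↔ G.IsOutput v.1) := by
  obtain ⟨hopenIn, hopenOut⟩ := hG.2.2.2.1 b hb
  constructor
  · constructor
    · rintro ⟨-, hin⟩
      have hminus : ((TGraph.Sub.top G).minus (G.bbox b)).IsInput v.1 := by
        refine ⟨⟨trivial, v.2⟩, hw, ?_⟩
        rintro e ⟨-, hs, ht⟩ hte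
        exact hin ⟨e, hs, ht⟩ (Subtype.ext hte)
      obtain ⟨-, -, h⟩ := hopenIn v.1 hminus
      exact ⟨hw, fun e hte => h e trivial hte⟩
    · rintro ⟨-, hin⟩
      exact ⟨hw, fun e hte => hin e.1 (congrArg Subtype.val hte)⟩
  · constructor
    · rintro ⟨-, hout⟩
      have hminus : ((TGraph.Sub.top G).minus (G.bbox b)).IsOutput v.1 := by
        refine ⟨⟨trivial, v.2⟩, hw, ?_⟩
        rintro e ⟨-, hs, ht⟩ hse
        exact hout ⟨e, hs, ht⟩ (Subtype.ext hse)
      obtain ⟨-, -, h⟩ := hopenOut v.1 hminus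
      exact ⟨hw, fun e => h e trivial⟩
    · rintro ⟨-, hout⟩
      exact ⟨hw, fun e hse => hout e.1 (congrArg Subtype.val hse)⟩
end
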